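/- arXiv:2303.04267 — 3 statements merged into one kernel-verified Lean document; each statement's English description precedes it below -/
import Mathlib

section
/- Let L be a locally finite distributive lattice with least element 0̂. If S is a finite order ideal of the poset of join-irreducible elements of L, and x = ⨆ S, then the set of join-irreducible elements of L that are ≤ x equals S. -/
/-!
Distributivity gives `j = j ⊓ ⨆ S = ⨆_{s ∈ S} (j ⊓ s)`, so a join-irreducible `j ≤ ⨆ S` equals
some `j ⊓ s`, i.e. lies below some `s ∈ S`; as `S` is an order ideal of join-irreducibles, `j ∈ S`.
-/

/-- `j` is join-irreducible: it is not the least upper bound of any finite set of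
strictly smaller elements (in particular a least element, being the empty join,
is not join-irreducible). -/
def JoinIrred {α : Type*} [PartialOrder α] (j : α) : Prop :=
  ¬ ∃ s : Finset α, (∀ a ∈ s, a < j) ∧ IsLUB (↑s : Set α) j

section DistribLattice

variable {α : Type*} [DistribLattice α] [OrderBot α]

theorem Finset.isLUB_image_inf_left {s : Finset α} {x : α} (hx : IsLUB (↑s : Set α) x) (a : α) :
    IsLUB ((a ⊓ ·) '' ↑s) (a ⊓ x) := by
  have hx_sup : x = s.sup id := hx.unique (by simpa using Finset.isLUB_sup (s := s) (f := id))
  rw [hx_sup, Finset.sup_inf_distrib_left]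
  exact Finset.isLUB_sup

theorem JoinIrred.exists_le_of_le_isLUB {j x : α} (hj : JoinIrred j) {s : Finset α}
    (hx : IsLUB (↑s : Set α) x) (hjx : j ≤ x) : ∃ a ∈ s, j ≤ a := by
  classical
  by_contra! hnot
  refine hj ⟨s.image (j ⊓ ·), ?_, ?_⟩
  · simp only [Finset.mem_image, forall_exists_index, and_imp, forall_apply_eq_imp_iff₂]
    exact fun a ha => inf_lt_left.mpr (hnot a ha)
  · simpa [inf_eq_left.mpr hjx] using Finset.isLUB_image_inf_left hx j

end DistribLattice

theorem joinIrreds_below_sup_eq_general {α : Type*} [DistribLattice α] [OrderBot α]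
    (S : Set α) (hfin : S.Finite) (hirr : ∀ j ∈ S, JoinIrred j)
    (hlow : ∀ p q : α, JoinIrred p → q ∈ S → p ≤ q → p ∈ S)
    (x : α) (hx : IsLUB S x) :
    {j | JoinIrred j ∧ j ≤ x} = S := by
  lift S to Finset α using hfin
  ext j
  constructor
  · rintro ⟨hj, hjx⟩
    obtain ⟨a, ha, hja⟩ := hj.exists_le_of_le_isLUB hx hjx
    exact hlow j a hj ha hja
  · exact fun hjS => ⟨hirr j hjS, hx.1 hjS⟩

/-- In a locally finite distributive lattice with least element, if `S` is a finite
order ideal of join-irreducibles with join `x`, then the join-irreducibles below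
`x` are exactly `S`. -/
theorem joinIrreds_below_sup_eq {α : Type*} [DistribLattice α] [OrderBot α]
    (hlf : ∀ a b : α, (Set.Icc a b).Finite)
    (S : Set α) (hfin : S.Finite) (hirr : ∀ j ∈ S, JoinIrred j)
    (hlow : ∀ p q : α, JoinIrred p → q ∈ S → p ≤ q → p ∈ S)
    (x : α) (hx : IsLUB S x) :
    {j | JoinIrred j ∧ j ≤ x} = S :=
  joinIrreds_below_sup_eq_general S hfin hirr hlow x hx
end

section
/- A distributive lattice with no infinite strictly descending chains and no bounded infinite strictly ascending chains is locally finite, i.e., every interval [x, y] is finite. -/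
/-!
In a distributive lattice a cover `q` of `a` lying below `b ⊔ p`, where `a ≤ b` and `p` covers
`a`, satisfies `q ≤ b` or `q = p`: distribute `q` over the join and note that `q ⊓ b ∈ [a, q]`.
So if infinitely many covers of `a` lay below `y`, the partial joins of an enumeration of them
would form a strictly increasing chain bounded by `y`. Hence every `b ≤ y` has finitely many
covers below `y`. Well-foundedness of `<` puts a cover of `b` below every `c ∈ (b, y]`, so
`[b, y] = {b} ∪ ⋃ [p, y]` over these finitely many covers `p`, and the ascending chain condition
below `y` lets us conclude by well-founded induction downwards from `y`.
-/

open Set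

section CovBy

variable {α : Type*} [DistribLattice α] {a b p q : α}

theorem CovBy.le_or_eq_of_le_sup (hq : a ⋖ q) (hp : a ⋖ p) (hab : a ≤ b) (hle : q ≤ b ⊔ p) :
    q ≤ b ∨ q = p := by
  have hsplit : q = q ⊓ b ⊔ q ⊓ p := by rw [← inf_sup_left, inf_eq_left.2 hle]
  rcases hq.eq_or_eq (le_inf hq.le hab) inf_le_left with hb | hb
  · have hqp : q ≤ p := by
      rw [hsplit, hb]
      exact sup_le hp.le inf_le_right
    exact Or.inr ((hp.eq_or_eq hq.le hqp).resolve_left hq.lt.ne')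
  · exact Or.inl (hb ▸ inf_le_right)

theorem CovBy.exists_eq_of_le_partialSups {e : ℕ → α} (he : ∀ n, a ⋖ e n) (hq : a ⋖ q) :
    ∀ n, q ≤ partialSups e n → ∃ i ≤ n, e i = q := by
  intro n
  induction n with
  | zero =>
    intro hle
    rcases hq.le_or_eq_of_le_sup (he 0) le_rfl (le_sup_of_le_right (by simpa using hle)) with
      h | h
    · exact absurd h hq.lt.not_ge
    · exact ⟨0, le_rfl, h.symm⟩
  | succ n ih =>
    intro hle
    rw [← Order.succ_eq_add_one, partialSups_succ] at hle
    have ha : a ≤ partialSups e n := (he 0).le.trans (le_partialSups_of_le e n.zero_le)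
    rcases hq.le_or_eq_of_le_sup (he _) ha hle with h | h
    · obtain ⟨i, hi, rfl⟩ := ih h
      exact ⟨i, hi.trans n.le_succ, rfl⟩
    · exact ⟨n + 1, le_rfl, h.symm⟩

theorem strictMono_partialSups_of_covBy {e : ℕ → α} (he : ∀ n, a ⋖ e n) (hinj : e.Injective) :
    StrictMono (partialSups e) := by
  refine strictMono_nat_of_lt_succ fun n => ?_
  rw [← Order.succ_eq_add_one, partialSups_succ]
  refine left_lt_sup.2 fun hle => ?_
  obtain ⟨i, hi, heq⟩ := (he (n + 1)).exists_eq_of_le_partialSups he n hle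
  exact n.not_succ_le_self (hinj heq ▸ hi :)

theorem finite_setOf_covBy_le {y : α} (hy : (Iic y).WellFoundedOn (· > ·)) :
    {p | a ⋖ p ∧ p ≤ y}.Finite := by
  by_contra hinf
  set f := Set.Infinite.natEmbedding _ hinf
  have hmono := strictMono_partialSups_of_covBy (fun n => (f n).2.1)
    (Subtype.coe_injective.comp f.injective)
  exact wellFoundedOn_iff_no_descending_seq.1 hy
    (RelEmbedding.natGT _ fun n => hmono n.lt_succ_self)
    fun n => partialSups_le _ n y fun i _ => (f i).2.2

end CovBy

theorem Icc_subset_insert_biUnion_covBy {α : Type*} [PartialOrder α] [IsStronglyAtomic α]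
    (b y : α) : Icc b y ⊆ insert b (⋃ p ∈ {p | b ⋖ p ∧ p ≤ y}, Icc p y) := by
  intro c ⟨hbc, hcy⟩
  rcases hbc.eq_or_lt with rfl | hlt
  · exact mem_insert _ _
  · obtain ⟨p, hbp, hpc⟩ := exists_covBy_le_of_lt hlt
    exact mem_insert_of_mem _ (mem_biUnion ⟨hbp, hpc.trans hcy⟩ ⟨hpc, hcy⟩)

theorem finite_Icc_of_wellFoundedOn_Iic {α : Type*} [DistribLattice α] [WellFoundedLT α]
    {y : α} (hy : (Iic y).WellFoundedOn (· > ·)) {b : α} (hb : b ≤ y) : (Icc b y).Finite := by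
  refine hy.induction hb (P := fun b => (Icc b y).Finite) fun b _ ih => ?_
  refine (((finite_setOf_covBy_le hy).biUnion fun p hp => ?_).insert b).subset
    (Icc_subset_insert_biUnion_covBy b y)
  exact ih p hp.2 hp.1.lt

/-- A distributive lattice with no infinite strictly descending chains and no
bounded infinite strictly ascending chains is locally finite. -/
theorem chain_conditions_locally_finite {α : Type*} [DistribLattice α]
    (hdesc : ¬ ∃ f : ℕ → α, StrictAnti f)
    (hasc : ¬ ∃ (f : ℕ → α) (b : α), StrictMono f ∧ ∀ n, f n < b) :
    ∀ x y : α, (Set.Icc x y).Finite := by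
  have : WellFoundedLT α := ⟨RelEmbedding.wellFounded_iff_isEmpty.2
    ⟨fun f => hdesc ⟨f, fun _ _ h => f.map_rel_iff.2 h⟩⟩⟩
  have hwf (y : α) : (Iic y).WellFoundedOn (· > ·) := by
    refine wellFoundedOn_iff_no_descending_seq.2 fun f hf =>
      hasc ⟨f, y, fun _ _ h => f.map_rel_iff.2 h, fun n => ?_⟩
    exact (f.map_rel_iff.2 n.lt_succ_self).trans_le (hf (n + 1))
  intro x y
  exact (finite_Icc_of_wellFoundedOn_Iic (hwf y) inf_le_right).subset
    (Icc_subset_Icc_left inf_le_left)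
end

section
/- In a distributive lattice with no infinite strictly descending chains and no bounded infinite strictly ascending chains, every set of join-irreducible elements bounded above by some y is finite. -/
/-- An infinite antichain of join-irreducibles bounded above gives a contradiction:
the partial joins form a bounded strictly increasing sequence. -/
lemma antichain_case {α : Type*} [DistribLattice α]
    (hasc : ¬ ∃ (f : ℕ → α) (b : α), StrictMono f ∧ ∀ n, f n < b)
    (a : ℕ → α) (hirr : ∀ n, JoinIrred (a n)) (y : α) (hy : ∀ n, a n ≤ y)
    (hanti : ∀ m n, m ≠ n → ¬ a m ≤ a n) : False := by
  classical
  have hne : ∀ n : ℕ, (Finset.range (n + 1)).Nonempty := fun n => Finset.nonempty_range_add_one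
  set b : ℕ → α := fun n => (Finset.range (n + 1)).sup' (hne n) a with hb
  have hsucc : ∀ n, b (n + 1) = a (n + 1) ⊔ b n := by
    intro n
    have : Finset.range (n + 2) = insert (n + 1) (Finset.range (n + 1)) :=
      Finset.range_add_one
    simp only [hb]
    rw [Finset.sup'_congr (hne (n+1)) this (fun x _ => rfl), Finset.sup'_insert]
  have hby : ∀ n, b n ≤ y := fun n => Finset.sup'_le _ _ fun i _ => hy i
  have hlt : ∀ n, b n < b (n + 1) := by
    intro n
    rw [hsucc n]
    refine lt_of_le_of_ne le_sup_right fun heq => ?_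
    have hle : a (n + 1) ≤ b n := by
      rw [heq]; exact le_sup_left
    -- join-irreducibility of a (n+1) is violated
    refine hirr (n + 1) ?_
    refine ⟨(Finset.range (n + 1)).image (fun i => a (n + 1) ⊓ a i), ?_, ?_, ?_⟩
    · intro x hx
      obtain ⟨i, hi, rfl⟩ := Finset.mem_image.mp hx
      refine lt_of_le_of_ne inf_le_left fun heq2 => ?_
      have : a (n + 1) ≤ a i := by
        conv_lhs => rw [← heq2]
        exact inf_le_right
      exact hanti (n + 1) i (by
        intro h; rw [h] at hi; exact absurd (Finset.mem_range.mp hi) (lt_irrefl _)) this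
    · -- upper bound
      intro x hx
      obtain ⟨i, hi, rfl⟩ := Finset.mem_image.mp hx
      exact inf_le_left
    · -- least
      intro u hu
      have key : a (n + 1) = (Finset.range (n + 1)).sup' (hne n) (fun i => a (n + 1) ⊓ a i) := by
        rw [← Finset.sup'_inf_distrib_left]
        exact (inf_eq_left.mpr hle).symm
      rw [key]
      refine Finset.sup'_le _ _ fun i hi => hu ?_
      exact Finset.mem_coe.mpr (Finset.mem_image.mpr ⟨i, hi, rfl⟩)
  have hmono : StrictMono b := strictMono_nat_of_lt_succ hlt
  exact hasc ⟨b, y, hmono, fun n => lt_of_lt_of_le (hlt n) (hby (n + 1))⟩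

/-- In a distributive lattice with no infinite strictly descending chains and no
bounded infinite strictly ascending chains, every set of join-irreducible elements
bounded above by some `y` is finite. -/
theorem bounded_set_of_joinIrreds_finite {α : Type*} [DistribLattice α]
    (hdesc : ¬ ∃ f : ℕ → α, StrictAnti f)
    (hasc : ¬ ∃ (f : ℕ → α) (b : α), StrictMono f ∧ ∀ n, f n < b)
    (S : Set α) (hirr : ∀ j ∈ S, JoinIrred j) (y : α) (hy : ∀ j ∈ S, j ≤ y) :
    S.Finite := by
  by_contra hfin
  have hS : S.Infinite := hfin
  set e := hS.natEmbedding with he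
  set f : ℕ → α := fun n => (e n : α) with hf
  have hfinj : Function.Injective f := fun m n h =>
    e.injective (Subtype.ext h)
  have hfS : ∀ n, f n ∈ S := fun n => (e n).2
  haveI : IsTrans α (· ≤ ·) := ⟨fun _ _ _ => le_trans⟩
  haveI : IsTrans α (· > ·) := ⟨fun _ _ _ h1 h2 => lt_trans h2 h1⟩
  obtain ⟨g, hg | hg⟩ := exists_increasing_or_nonincreasing_subseq (· ≤ ·) f
  · -- increasing chain: bounded strictly increasing, contradiction
    have hsm : StrictMono (f ∘ g) := by
      intro m n hmn
      exact lt_of_le_of_ne (hg m n hmn)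
        (fun h => absurd (hfinj h) (ne_of_lt (g.strictMono hmn)))
    refine hasc ⟨f ∘ g, y, hsm, fun n => ?_⟩
    exact lt_of_lt_of_le (hsm (Nat.lt_succ_self n)) (hy _ (hfS _))
  · -- no increasing pair: extract either descending chain or antichain
    obtain ⟨g₂, hg₂ | hg₂⟩ := exists_increasing_or_nonincreasing_subseq (· > ·) (f ∘ g)
    · -- strictly descending
      refine hdesc ⟨f ∘ g ∘ g₂, ?_⟩
      intro m n hmn
      exact hg₂ m n hmn
    · -- antichain
      set a : ℕ → α := f ∘ g ∘ g₂ with ha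
      have hanti : ∀ m n, m ≠ n → ¬ a m ≤ a n := by
        intro m n hmn hle
        rcases hmn.lt_or_gt with h | h
        · exact hg (g₂ m) (g₂ n) (g₂.strictMono h) hle
        · -- n < m : ¬ a n ≤ a m and ¬ a n > a m
          have h1 : ¬ a n ≤ a m := hg (g₂ n) (g₂ m) (g₂.strictMono h)
          have h2 : ¬ a n > a m := hg₂ n m h
          exact h2 (lt_of_le_of_ne hle (fun hEq => h1 (le_of_eq hEq.symm)))
      exact antichain_case hasc a (fun n => hirr _ (hfS _)) y
        (fun n => hy _ (hfS _)) hanti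
end
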